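/- Let (S, A, T, γ) be a finite MDP with γ ∈ [0,1], horizon T_h ≥ 1 and deterministic dynamics given by N : S × A → S. Let φ : S × A → ℝ^d be a feature map and for θ ∈ ℝ^d let π_{θ,t} be the soft-VI policy for the linear reward r_θ(s,a) = θᵀφ(s,a). Then for every feasible trajectory τ = (s_0, a_0, s_1, a_1, …, s_{T_h−1}, a_{T_h−1}) (i.e. s_{t+1} = N(s_t, a_t) for all t), the discounted log-likelihood θ ↦ Σ_{t=0}^{T_h−1} γ^t log π_{θ,t}(a_t|s_t) is differentiable and its gradient equals the feature-expectation gap: Σ_{t=0}^{T_h−1} γ^t φ(s_t, a_t) − E_{π_θ}[ Σ_{t=0}^{T_h−1} γ^t φ(S_t, A_t) | S_0 = s_0 ]. -/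

import Mathlib

/-!
Along a feasible trajectory, `log π_t(a_t|s_t) = Q_t(s_t,a_t) − V_t(s_t)`. Differentiating soft
value iteration shows that `∇Q_t(s,a) = φ(s,a) + γ ∑_{s'} T(s'|s,a) ∇V_{t+1}(s')` and that
`∇V_t(s)` is the `π_t`-average of `∇Q_t(s,·)`, so `γ^t ∇V_t(s)` is the discounted feature
expectation from time `t` on. Under deterministic dynamics the next-state average in
`γ^t ∇Q_t(s_t,a_t)` is just `γ^{t+1} ∇V_{t+1}(s_{t+1})`, and the sum over `t` telescopes to
`∑_t γ^t φ(s_t,a_t) − ∇V_0(s_0)`.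
-/

open scoped RealInnerProductSpace

/-- Soft value iteration, indexed by the number of remaining steps after the current one:
`softQ T γ r k = Q_{Th-1-k}` when the horizon is `Th`.  Thus `softQ T γ r 0 s a = r s a`
(the last step `t = Th-1`) and
`softQ T γ r (k+1) s a = r s a + γ ∑_{s'} T(s'|s,a) V(k, s')`. -/
noncomputable def softQ {S A : Type*} [Fintype S] [Fintype A]
    (T : S → A → S → ℝ) (γ : ℝ) (r : S → A → ℝ) : ℕ → S → A → ℝ
  | 0 => fun s a => r s a
  | k + 1 => fun s a =>
      r s a + γ * ∑ s', T s a s' * Real.log (∑ a', Real.exp (softQ T γ r k s' a'))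

/-- Soft state-value: `V(s) = log ∑_a exp Q(s,a)` (indexed by remaining steps). -/
noncomputable def softV {S A : Type*} [Fintype S] [Fintype A]
    (T : S → A → S → ℝ) (γ : ℝ) (r : S → A → ℝ) (k : ℕ) (s : S) : ℝ :=
  Real.log (∑ a, Real.exp (softQ T γ r k s a))

/-- `expSumV T π φ t k s` is the (vector-valued) expectation
`E_π[ ∑_{t'=t}^{t+k-1} φ t' S_{t'} A_{t'} | S_t = s ]` over trajectories generated from
state `s` at time `t` by the time-dependent policy `π` and transitions `T`. -/
noncomputable def expSumV {S A : Type*} [Fintype S] [Fintype A] {d : ℕ}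
    (T : S → A → S → ℝ) (π : ℕ → S → A → ℝ)
    (φ : ℕ → S → A → EuclideanSpace ℝ (Fin d)) : ℕ → ℕ → S → EuclideanSpace ℝ (Fin d)
  | _, 0, _ => 0
  | t, k + 1, s => ∑ a, π t s a • (φ t s a + ∑ s', T s a s' • expSumV T π φ (t + 1) k s')

section Gradient

variable {F : Type*} [NormedAddCommGroup F] [InnerProductSpace ℝ F] [CompleteSpace F]
  {f g : F → ℝ} {f' g' x : F}

lemma hasGradientAt_inner_left (v x : F) : HasGradientAt (fun y => ⟪y, v⟫) v x := by
  have hfun : (fun y : F => ⟪y, v⟫) = InnerProductSpace.toDual ℝ F v := by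
    funext y
    rw [InnerProductSpace.toDual_apply_apply, real_inner_comm]
  rw [hasGradientAt_iff_hasFDerivAt, hfun]
  exact (InnerProductSpace.toDual ℝ F v).hasFDerivAt

lemma HasGradientAt.add (hf : HasGradientAt f f' x) (hg : HasGradientAt g g' x) :
    HasGradientAt (fun y => f y + g y) (f' + g') x := by
  rw [hasGradientAt_iff_hasFDerivAt, map_add] at *
  exact hf.add hg

lemma HasGradientAt.sub (hf : HasGradientAt f f' x) (hg : HasGradientAt g g' x) :
    HasGradientAt (fun y => f y - g y) (f' - g') x := by
  rw [hasGradientAt_iff_hasFDerivAt, map_sub] at *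
  exact hf.sub hg

lemma HasGradientAt.const_mul (c : ℝ) (hf : HasGradientAt f f' x) :
    HasGradientAt (fun y => c * f y) (c • f') x := by
  rw [hasGradientAt_iff_hasFDerivAt, map_smul] at *
  exact hf.const_mul c

lemma HasGradientAt.sum {ι : Type*} {u : Finset ι} {f : ι → F → ℝ} {f' : ι → F}
    (h : ∀ i ∈ u, HasGradientAt (f i) (f' i) x) :
    HasGradientAt (fun y => ∑ i ∈ u, f i y) (∑ i ∈ u, f' i) x := by
  rw [hasGradientAt_iff_hasFDerivAt, map_sum]
  exact HasFDerivAt.fun_sum h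

lemma HasDerivAt.comp_hasGradientAt {h : ℝ → ℝ} {h' : ℝ} (hh : HasDerivAt h h' (f x))
    (hf : HasGradientAt f f' x) : HasGradientAt (fun y => h (f y)) (h' • f') x := by
  rw [hasGradientAt_iff_hasFDerivAt, map_smul] at *
  exact hh.comp_hasFDerivAt x hf

lemma HasGradientAt.log_sum_exp {ι : Type*} [Fintype ι] [Nonempty ι] {f : ι → F → ℝ}
    {f' : ι → F} (h : ∀ i, HasGradientAt (f i) (f' i) x) :
    HasGradientAt (fun y => Real.log (∑ i, Real.exp (f i y)))
      (∑ i, Real.exp (f i x - Real.log (∑ j, Real.exp (f j x))) • f' i) x := by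
  have hpos : 0 < ∑ i, Real.exp (f i x) :=
    Finset.sum_pos (fun i _ => Real.exp_pos _) Finset.univ_nonempty
  have hsum : HasGradientAt (fun y => ∑ i, Real.exp (f i y)) (∑ i, Real.exp (f i x) • f' i) x :=
    HasGradientAt.sum fun i _ => (Real.hasDerivAt_exp _).comp_hasGradientAt (h i)
  convert (Real.hasDerivAt_log hpos.ne').comp_hasGradientAt
    (f := fun y => ∑ i, Real.exp (f i y)) hsum using 1
  rw [Finset.smul_sum]
  refine Finset.sum_congr rfl fun i _ => ?_
  rw [smul_smul, Real.exp_sub, Real.exp_log hpos, div_eq_inv_mul]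

end Gradient

section SoftValueIteration

variable {S A : Type*} [Fintype S] [Fintype A]

noncomputable def softPolicy (T : S → A → S → ℝ) (γ : ℝ) (r : S → A → ℝ) (k : ℕ) (s : S)
    (a : A) : ℝ :=
  Real.exp (softQ T γ r k s a - softV T γ r k s)

variable {F : Type*} [NormedAddCommGroup F] [InnerProductSpace ℝ F]
  (T : S → A → S → ℝ) (γ : ℝ) (φ : S → A → F) (θ : F)

noncomputable def softQGrad : ℕ → S → A → F
  | 0 => φ
  | k + 1 => fun s a => φ s a + γ • ∑ s', T s a s' •
      ∑ a', softPolicy T γ (fun s a => ⟪θ, φ s a⟫) k s' a' • softQGrad k s' a'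

noncomputable def softVGrad (k : ℕ) (s : S) : F :=
  ∑ a, softPolicy T γ (fun s a => ⟪θ, φ s a⟫) k s a • softQGrad T γ φ θ k s a

lemma softQGrad_succ (k : ℕ) (s : S) (a : A) :
    softQGrad T γ φ θ (k + 1) s a = φ s a + γ • ∑ s', T s a s' • softVGrad T γ φ θ k s' :=
  rfl

variable [CompleteSpace F] [Nonempty A]

lemma hasGradientAt_softV_of_softQ {k : ℕ} {s : S}
    (hQ : ∀ a, HasGradientAt (fun θ' => softQ T γ (fun s a => ⟪θ', φ s a⟫) k s a)
      (softQGrad T γ φ θ k s a) θ) :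
    HasGradientAt (fun θ' => softV T γ (fun s a => ⟪θ', φ s a⟫) k s)
      (softVGrad T γ φ θ k s) θ :=
  HasGradientAt.log_sum_exp hQ

lemma hasGradientAt_softQ (k : ℕ) (s : S) (a : A) :
    HasGradientAt (fun θ' => softQ T γ (fun s a => ⟪θ', φ s a⟫) k s a)
      (softQGrad T γ φ θ k s a) θ := by
  induction k generalizing s a with
  | zero => exact hasGradientAt_inner_left (φ s a) θ
  | succ k ih =>
    have hV (s' : S) := hasGradientAt_softV_of_softQ T γ φ θ (ih s')
    exact (hasGradientAt_inner_left (φ s a) θ).add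
      ((HasGradientAt.sum fun s' _ => (hV s').const_mul (T s a s')).const_mul γ)

lemma hasGradientAt_softV (k : ℕ) (s : S) :
    HasGradientAt (fun θ' => softV T γ (fun s a => ⟪θ', φ s a⟫) k s)
      (softVGrad T γ φ θ k s) θ :=
  hasGradientAt_softV_of_softQ T γ φ θ (hasGradientAt_softQ T γ φ θ k s)

end SoftValueIteration

section FeatureExpectation

variable {S A : Type*} [Fintype S] [Fintype A] {d : ℕ}
  (T : S → A → S → ℝ) (γ : ℝ) (φ : S → A → EuclideanSpace ℝ (Fin d))
  (θ : EuclideanSpace ℝ (Fin d)) (Th : ℕ)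

noncomputable def softFeatureExpectation : ℕ → ℕ → S → EuclideanSpace ℝ (Fin d) :=
  expSumV T (fun t => softPolicy T γ (fun s a => ⟪θ, φ s a⟫) (Th - 1 - t))
    (fun t s a => γ ^ t • φ s a)

lemma softFeatureExpectation_zero (t : ℕ) (s : S) :
    softFeatureExpectation T γ φ θ Th t 0 s = 0 :=
  rfl

lemma softFeatureExpectation_succ (t k : ℕ) (s : S) :
    softFeatureExpectation T γ φ θ Th t (k + 1) s =
      ∑ a, softPolicy T γ (fun s a => ⟪θ, φ s a⟫) (Th - 1 - t) s a •
        (γ ^ t • φ s a + ∑ s', T s a s' • softFeatureExpectation T γ φ θ Th (t + 1) k s') :=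
  rfl

lemma softFeatureExpectation_eq_smul_softVGrad {k t : ℕ} (h : t + k + 1 = Th) (s : S) :
    softFeatureExpectation T γ φ θ Th t (k + 1) s = γ ^ t • softVGrad T γ φ θ k s := by
  induction k generalizing t s with
  | zero =>
    have h0 : Th - 1 - t = 0 := by omega
    rw [softFeatureExpectation_succ, h0, softVGrad, Finset.smul_sum]
    refine Finset.sum_congr rfl fun a _ => ?_
    simp only [softFeatureExpectation_zero, smul_zero, Finset.sum_const_zero, add_zero]
    exact smul_comm _ _ _
  | succ k ih =>
    have hk : Th - 1 - t = k + 1 := by omega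
    rw [softFeatureExpectation_succ, hk, softVGrad, Finset.smul_sum]
    refine Finset.sum_congr rfl fun a _ => ?_
    have hnext : ∑ s', T s a s' • softFeatureExpectation T γ φ θ Th (t + 1) (k + 1) s' =
        γ ^ t • γ • ∑ s', T s a s' • softVGrad T γ φ θ k s' := by
      simp only [ih (t := t + 1) (by omega), Finset.smul_sum, pow_succ, mul_smul]
      exact Finset.sum_congr rfl fun s' _ => by rw [smul_comm (T s a s'), smul_comm (T s a s')]
    rw [hnext, ← smul_add, softQGrad_succ, smul_comm]

end FeatureExpectation

section Trajectory

variable {S A : Type*} [Fintype S] [DecidableEq S] {T : S → A → S → ℝ} {N : S → A → S}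

lemma sum_transition_smul_of_deterministic {M : Type*} [AddCommMonoid M] [Module ℝ M]
    (hdet : ∀ s a s', T s a s' = if s' = N s a then 1 else 0) (f : S → M) (s : S) (a : A) :
    ∑ s', T s a s' • f s' = f (N s a) := by
  simp [hdet, ite_smul]

variable [Fintype A] {d : ℕ} (γ : ℝ) (φ : S → A → EuclideanSpace ℝ (Fin d)) (θ : EuclideanSpace ℝ (Fin d))
  {Th : ℕ} {σs : ℕ → S} {as : ℕ → A}

lemma sum_discounted_softGrad_eq_sub
    (hdet : ∀ s a s', T s a s' = if s' = N s a then 1 else 0)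
    (hfeas : ∀ t, t + 1 < Th → σs (t + 1) = N (σs t) (as t)) :
    ∑ t ∈ Finset.range Th, γ ^ t • (softQGrad T γ φ θ (Th - 1 - t) (σs t) (as t) -
        softVGrad T γ φ θ (Th - 1 - t) (σs t)) =
      ∑ t ∈ Finset.range Th, γ ^ t • φ (σs t) (as t) -
        softFeatureExpectation T γ φ θ Th 0 Th (σs 0) := by
  obtain ⟨G, hG⟩ : ∃ G : ℕ → EuclideanSpace ℝ (Fin d),
      ∀ t, G t = softFeatureExpectation T γ φ θ Th t (Th - t) (σs t) := ⟨_, fun _ => rfl⟩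
  have hV (t : ℕ) (ht : t < Th) : γ ^ t • softVGrad T γ φ θ (Th - 1 - t) (σs t) = G t := by
    rw [hG, show Th - t = Th - 1 - t + 1 by omega]
    exact (softFeatureExpectation_eq_smul_softVGrad T γ φ θ Th (by omega) _).symm
  have hQ (t : ℕ) (ht : t < Th) : γ ^ t • softQGrad T γ φ θ (Th - 1 - t) (σs t) (as t) =
      γ ^ t • φ (σs t) (as t) + G (t + 1) := by
    rcases (show t + 1 = Th ∨ t + 1 < Th by omega) with hlast | hnext
    · rw [hG, hlast, show Th - 1 - t = 0 by omega, Nat.sub_self, softFeatureExpectation_zero,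
        add_zero]
      rfl
    · rw [show Th - 1 - t = Th - 1 - (t + 1) + 1 by omega, softQGrad_succ,
        sum_transition_smul_of_deterministic hdet, ← hfeas t hnext, smul_add, smul_smul,
        ← pow_succ, hV (t + 1) hnext]
  calc _ = ∑ t ∈ Finset.range Th, (γ ^ t • φ (σs t) (as t) + (G (t + 1) - G t)) := by
        refine Finset.sum_congr rfl fun t ht => ?_
        rw [Finset.mem_range] at ht
        rw [smul_sub, hQ t ht, hV t ht]
        abel
    _ = _ := by
        rw [Finset.sum_add_distrib, Finset.sum_range_sub, hG Th, hG 0, Nat.sub_self,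
          Nat.sub_zero, softFeatureExpectation_zero, zero_sub, sub_eq_add_neg]

end Trajectory

theorem stmt3_general {S A : Type*} [Fintype S] [Fintype A] [DecidableEq S] {d : ℕ}
    (T : S → A → S → ℝ)
    (γ : ℝ)
    (Th : ℕ)
    -- deterministic dynamics given by `N`
    (N : S → A → S) (hdet : ∀ s a s', T s a s' = if s' = N s a then 1 else 0)
    (φ : S → A → EuclideanSpace ℝ (Fin d)) (θ : EuclideanSpace ℝ (Fin d))
    -- a feasible trajectory `(σs 0, as 0, σs 1, as 1, …, σs (Th-1), as (Th-1))`
    (σs : ℕ → S) (as : ℕ → A)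
    (hfeas : ∀ t, t + 1 < Th → σs (t + 1) = N (σs t) (as t)) :
    -- `θ' ↦ ∑_t γ^t log π_{θ',t}(a_t|s_t)` is differentiable at `θ`, with gradient
    -- `∑_t γ^t φ(s_t,a_t) − E_{π_θ}[ ∑_t γ^t φ(S_t,A_t) | S_0 = σs 0 ]`.
    HasGradientAt
      (fun θ' : EuclideanSpace ℝ (Fin d) =>
        ∑ t ∈ Finset.range Th, γ ^ t *
          Real.log (Real.exp (softQ T γ (fun s a => ⟪θ', φ s a⟫) (Th - 1 - t) (σs t) (as t)
            - softV T γ (fun s a => ⟪θ', φ s a⟫) (Th - 1 - t) (σs t))))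
      ((∑ t ∈ Finset.range Th, γ ^ t • φ (σs t) (as t)) -
        expSumV T
          (fun t' s' a => Real.exp (softQ T γ (fun s a => ⟪θ, φ s a⟫) (Th - 1 - t') s' a
              - softV T γ (fun s a => ⟪θ, φ s a⟫) (Th - 1 - t') s'))
          (fun t' s' a => γ ^ t' • φ s' a) 0 Th (σs 0))
      θ := by
  have : Nonempty A := ⟨as 0⟩
  have hgrad := HasGradientAt.sum (u := Finset.range Th) fun t _ =>
    ((hasGradientAt_softQ T γ φ θ (Th - 1 - t) (σs t) (as t)).sub
      (hasGradientAt_softV T γ φ θ (Th - 1 - t) (σs t))).const_mul (γ ^ t)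
  rw [sum_discounted_softGrad_eq_sub γ φ θ hdet hfeas] at hgrad
  simp only [Real.log_exp]
  exact hgrad

theorem stmt3 {S A : Type*} [Fintype S] [Fintype A] [DecidableEq S] [Nonempty S] [Nonempty A] {d : ℕ}
    (T : S → A → S → ℝ)
    (hT0 : ∀ s a s', 0 ≤ T s a s') (hT1 : ∀ s a, ∑ s', T s a s' = 1)
    (γ : ℝ) (hγ : γ ∈ Set.Icc (0 : ℝ) 1)
    (Th : ℕ) (hTh : 1 ≤ Th)
    -- deterministic dynamics given by `N`
    (N : S → A → S) (hdet : ∀ s a s', T s a s' = if s' = N s a then 1 else 0)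
    (φ : S → A → EuclideanSpace ℝ (Fin d)) (θ : EuclideanSpace ℝ (Fin d))
    -- a feasible trajectory `(σs 0, as 0, σs 1, as 1, …, σs (Th-1), as (Th-1))`
    (σs : ℕ → S) (as : ℕ → A)
    (hfeas : ∀ t, t + 1 < Th → σs (t + 1) = N (σs t) (as t)) :
    -- `θ' ↦ ∑_t γ^t log π_{θ',t}(a_t|s_t)` is differentiable at `θ`, with gradient
    -- `∑_t γ^t φ(s_t,a_t) − E_{π_θ}[ ∑_t γ^t φ(S_t,A_t) | S_0 = σs 0 ]`.
    HasGradientAt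
      (fun θ' : EuclideanSpace ℝ (Fin d) =>
        ∑ t ∈ Finset.range Th, γ ^ t *
          Real.log (Real.exp (softQ T γ (fun s a => ⟪θ', φ s a⟫) (Th - 1 - t) (σs t) (as t)
            - softV T γ (fun s a => ⟪θ', φ s a⟫) (Th - 1 - t) (σs t))))
      ((∑ t ∈ Finset.range Th, γ ^ t • φ (σs t) (as t)) -
        expSumV T
          (fun t' s' a => Real.exp (softQ T γ (fun s a => ⟪θ, φ s a⟫) (Th - 1 - t') s' a
              - softV T γ (fun s a => ⟪θ, φ s a⟫) (Th - 1 - t') s'))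
          (fun t' s' a => γ ^ t' • φ s' a) 0 Th (σs 0))
      θ :=
  stmt3_general T γ Th N hdet φ θ σs as hfeas
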